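/- arXiv:1812.06169 — 4 statements merged into one kernel-verified Lean document; each statement's English description precedes it below -/
import Mathlib

section
/- (Lemma 3.1, abstract form) Let f⁰, f¹, ..., fᴺ be a sequence of flows on a finite path set P with delays d : P → ℝ≥0, where for each step n, fⁿ⁺¹ is obtained from fⁿ by removing rate δₙ > 0 from a slowest flow-carrying path of fⁿ. Then T(f⁰) ≥ T(fᴺ) + (∑_{n=0}^{N-1} δₙ)·M(fᴺ). -/
noncomputable def tot {P : Type*} [Fintype P] (x d : P → ℝ) : ℝ := ∑ p, x p * d p

noncomputable def maxDelay {P : Type*} [Fintype P] (x d : P → ℝ) : ℝ :=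
  sSup (d '' {p | 0 < x p})

/-! Each step lowers the total delay by exactly `δₙ · M(fⁿ)`, and the maximum delay never increases
since no path gains flow; so `T(f⁰) - T(fᴺ) = ∑ δₙ · M(fⁿ) ≥ (∑ δₙ) · M(fᴺ)`. -/

open Finset Function

theorem add_sum_mul_le_of_eq_add_mul {T M δ : ℕ → ℝ} {N : ℕ}
    (hT : ∀ n < N, T n = T (n + 1) + δ n * M n) (hM : ∀ n < N, M (n + 1) ≤ M n)
    (hδ : ∀ n < N, 0 ≤ δ n) :
    T N + (∑ n ∈ range N, δ n) * M N ≤ T 0 := by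
  induction N with
  | zero => simp
  | succ N ih =>
    have hle := ih (fun n hn => hT n (by omega)) (fun n hn => hM n (by omega))
      (fun n hn => hδ n (by omega))
    have hsum : 0 ≤ ∑ n ∈ range N, δ n :=
      sum_nonneg fun n hn => hδ n (by simp at hn; omega)
    rw [hT N (by omega)] at hle
    rw [sum_range_succ]
    nlinarith [mul_le_mul_of_nonneg_left (hM N (by omega)) hsum,
      mul_le_mul_of_nonneg_left (hM N (by omega)) (hδ N (by omega))]

section Flows

variable {P : Type*} [Fintype P]

theorem tot_update [DecidableEq P] (x d : P → ℝ) (p : P) (v : ℝ) :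
    tot (update x p v) d = tot x d + (v - x p) * d p := by
  have hx : update x p v = x + Pi.single p (v - x p) := by
    ext q
    by_cases hqp : q = p <;> simp [hqp]
  simp [tot, hx, add_mul, sum_add_distrib, Pi.single_apply]

theorem maxDelay_nonneg {x d : P → ℝ} (hd : ∀ p, 0 ≤ d p) : 0 ≤ maxDelay x d :=
  Real.sSup_nonneg (by rintro _ ⟨p, -, rfl⟩; exact hd p)

theorem maxDelay_mono {x y d : P → ℝ} (hd : ∀ p, 0 ≤ d p)
    (h : {p | 0 < y p} ⊆ {p | 0 < x p}) : maxDelay y d ≤ maxDelay x d := by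
  rcases Set.eq_empty_or_nonempty {p | 0 < y p} with hy | ⟨q, hq⟩
  · simpa [maxDelay, hy] using maxDelay_nonneg hd
  · exact csSup_le_csSup (Set.toFinite _).bddAbove ⟨d q, q, hq, rfl⟩ (Set.image_mono h)

theorem maxDelay_update_le [DecidableEq P] {x d : P → ℝ} (hd : ∀ p, 0 ≤ d p) {p : P}
    (hp : 0 < x p) (v : ℝ) : maxDelay (update x p v) d ≤ maxDelay x d := by
  refine maxDelay_mono hd fun q hq => ?_
  by_cases hqp : q = p
  · exact hqp ▸ hp
  · simpa [hqp] using hq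

end Flows

theorem stmt_7_general {P : Type*} [Fintype P] [DecidableEq P]
    (d : P → ℝ) (hd : ∀ p, 0 ≤ d p)
    (N : ℕ) (f : ℕ → P → ℝ) (δ : ℕ → ℝ)
    (hstep : ∀ n < N, 0 < δ n ∧ ∃ p : P, 0 < f n p ∧ d p = maxDelay (f n) d ∧
      δ n ≤ f n p ∧ f (n + 1) = Function.update (f n) p (f n p - δ n)) :
    tot (f 0) d ≥ tot (f N) d + (∑ n ∈ Finset.range N, δ n) * maxDelay (f N) d := by
  refine add_sum_mul_le_of_eq_add_mul (T := fun n => tot (f n) d) (M := fun n => maxDelay (f n) d)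
    (fun n hn => ?_) (fun n hn => ?_)
    (fun n hn => (hstep n hn).1.le)
  · obtain ⟨-, p, -, hslowest, -, hnext⟩ := hstep n hn
    rw [hnext, tot_update, ← hslowest]
    ring
  · obtain ⟨-, p, hp, -, -, hnext⟩ := hstep n hn
    exact hnext ▸ maxDelay_update_le hd hp _

theorem stmt_7 {P : Type*} [Fintype P] [DecidableEq P]
    (d : P → ℝ) (hd : ∀ p, 0 ≤ d p)
    (N : ℕ) (f : ℕ → P → ℝ) (δ : ℕ → ℝ)
    (hx : ∀ p, 0 ≤ f 0 p)
    (hstep : ∀ n < N, 0 < δ n ∧ ∃ p : P, 0 < f n p ∧ d p = maxDelay (f n) d ∧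
      δ n ≤ f n p ∧ f (n + 1) = Function.update (f n) p (f n p - δ n)) :
    tot (f 0) d ≥ tot (f N) d + (∑ n ∈ Finset.range N, δ n) * maxDelay (f N) d :=
  stmt_7_general d hd N f δ hstep
end

section
/- (Corollary of Lemma 3.1) Under the setting of Lemma 3.1, if the algorithm deletes a total rate of ε·|f⁰| from the slowest flow-carrying paths of f⁰ (where 0 < ε < 1 and |f⁰| > 0), producing flow f̄, then ε·M(f̄) ≤ A(f⁰), where A(f⁰) = T(f⁰)/|f⁰| is the average delay of the original flow. -/
noncomputable def thr {P : Type*} [Fintype P] (x : P → ℝ) : ℝ := ∑ p, x p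

theorem stmt_8 {P : Type*} [Fintype P] [DecidableEq P]
    (d : P → ℝ) (hd : ∀ p, 0 ≤ d p)
    (N : ℕ) (f : ℕ → P → ℝ) (δ : ℕ → ℝ)
    (hx : ∀ p, 0 ≤ f 0 p)
    (hstep : ∀ n < N, 0 < δ n ∧ ∃ p : P, 0 < f n p ∧ d p = maxDelay (f n) d ∧
      δ n ≤ f n p ∧ f (n + 1) = Function.update (f n) p (f n p - δ n))
    (ε : ℝ) (hε : 0 < ε) (hε1 : ε < 1)
    (hthr : 0 < thr (f 0))
    (htotal : (∑ n ∈ Finset.range N, δ n) = ε * thr (f 0)) :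
    ε * maxDelay (f N) d ≤ tot (f 0) d / thr (f 0) := by
  -- nonnegativity of flows
  have hnonneg : ∀ n, n ≤ N → ∀ p, 0 ≤ f n p := by
    intro n
    induction n with
    | zero => intro _ p; exact hx p
    | succ n ih =>
      intro hn p
      obtain ⟨hδ, q, hq, hdq, hδq, hupd⟩ := hstep n (by omega)
      rw [hupd]
      by_cases hpq : p = q
      · subst hpq; rw [Function.update_self]; linarith
      · rw [Function.update_of_ne hpq]; exact ih (by omega) p
  -- maxDelay nonneg
  have hM0 : ∀ x : P → ℝ, 0 ≤ maxDelay x d := by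
    intro x
    apply Real.sSup_nonneg
    rintro a ⟨p, _, rfl⟩
    exact hd p
  -- monotonicity of maxDelay w.r.t. support
  have hmono : ∀ (x y : P → ℝ), (∀ p, 0 < y p → 0 < x p) →
      maxDelay y d ≤ maxDelay x d := by
    intro x y h
    apply Real.sSup_le _ (hM0 x)
    rintro a ⟨p, hp, rfl⟩
    exact le_csSup ((Set.toFinite _).bddAbove) ⟨p, h p hp, rfl⟩
  -- one-step support inclusion
  have hstep_supp : ∀ n, n < N → ∀ p, 0 < f (n + 1) p → 0 < f n p := by
    intro n hn p hp
    obtain ⟨hδ, q, hq, _, hδq, hupd⟩ := hstep n hn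
    rw [hupd] at hp
    by_cases hpq : p = q
    · subst hpq; rw [Function.update_self] at hp; linarith
    · rwa [Function.update_of_ne hpq] at hp
  -- multi-step support inclusion
  have key : ∀ k n, n + k ≤ N → ∀ p, 0 < f (n + k) p → 0 < f n p := by
    intro k
    induction k with
    | zero => intro n _ p hp; simpa using hp
    | succ k ih =>
      intro n hn p hp
      have hp' : 0 < f (n + k + 1) p := by
        rwa [show n + (k + 1) = n + k + 1 by ring] at hp
      exact ih n (by omega) p (hstep_supp (n + k) (by omega) p hp')
  have hMle : ∀ n, n ≤ N → maxDelay (f N) d ≤ maxDelay (f n) d := by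
    intro n hn
    refine hmono (f n) (f N) ?_
    intro p hp
    refine key (N - n) n (by omega) p ?_
    rwa [show n + (N - n) = N by omega]
  -- step equation for total delay
  have htot : ∀ n, n < N → tot (f (n + 1)) d = tot (f n) d - δ n * maxDelay (f n) d := by
    intro n hn
    obtain ⟨hδ, q, hq, hdq, hδq, hupd⟩ := hstep n hn
    rw [hupd]
    have hpt : ∀ r : P, Function.update (f n) q (f n q - δ n) r * d r
        = f n r * d r - (if r = q then δ n * d q else 0) := by
      intro r
      by_cases hrq : r = q
      · subst hrq; rw [Function.update_self]; simp; ring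
      · rw [Function.update_of_ne hrq]; simp [hrq]
    unfold tot
    rw [Finset.sum_congr rfl (fun r _ => hpt r), Finset.sum_sub_distrib]
    simp [hdq]
  -- main telescoping inequality
  have main : ∀ n, n ≤ N →
      tot (f n) d + (∑ k ∈ Finset.range n, δ k) * maxDelay (f N) d ≤ tot (f 0) d := by
    intro n
    induction n with
    | zero => intro _; simp
    | succ n ih =>
      intro hn
      have hn' : n ≤ N := by omega
      obtain ⟨hδ, -⟩ := hstep n (by omega)
      have h1 := htot n (by omega)
      have h2 := hMle n hn'
      have h3 : δ n * maxDelay (f N) d ≤ δ n * maxDelay (f n) d :=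
        mul_le_mul_of_nonneg_left h2 hδ.le
      have ihh := ih hn'
      rw [Finset.sum_range_succ, h1]
      have hexp : (∑ k ∈ Finset.range n, δ k + δ n) * maxDelay (f N) d
          = (∑ k ∈ Finset.range n, δ k) * maxDelay (f N) d + δ n * maxDelay (f N) d := by
        ring
      linarith [hexp.le]
  have hTN : 0 ≤ tot (f N) d :=
    Finset.sum_nonneg fun p _ => mul_nonneg (hnonneg N le_rfl p) (hd p)
  have hmain := main N le_rfl
  rw [htotal] at hmain
  rw [le_div_iff₀ hthr]
  have : ε * maxDelay (f N) d * thr (f 0) = ε * thr (f 0) * maxDelay (f N) d := by ring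
  linarith
end

section
/- Under the setting of Lemma 3.1 with original flow f̂ and resulting flow f̄ after deleting total rate ε·|f̂| (0 < ε < 1), if A(f̂) ≤ D for some constant D ≥ 0, then M(f̄) ≤ D/ε. -/
theorem stmt_9 {P : Type*} [Fintype P] [DecidableEq P]
    (d : P → ℝ) (hd : ∀ p, 0 ≤ d p)
    (N : ℕ) (f : ℕ → P → ℝ) (δ : ℕ → ℝ)
    (hx : ∀ p, 0 ≤ f 0 p)
    (hstep : ∀ n < N, 0 < δ n ∧ ∃ p : P, 0 < f n p ∧ d p = maxDelay (f n) d ∧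
      δ n ≤ f n p ∧ f (n + 1) = Function.update (f n) p (f n p - δ n))
    (ε : ℝ) (hε : 0 < ε) (hε1 : ε < 1)
    (hthr : 0 < thr (f 0))
    (htotal : (∑ n ∈ Finset.range N, δ n) = ε * thr (f 0))
    (D : ℝ) (hD : 0 ≤ D)
    (havg : tot (f 0) d / thr (f 0) ≤ D) :
    maxDelay (f N) d ≤ D / ε := by
  have hbdd : ∀ x : P → ℝ, BddAbove (d '' {p | 0 < x p}) := fun x =>
    (Set.toFinite _).bddAbove
  -- nonnegativity
  have hnn : ∀ n, n ≤ N → ∀ p, 0 ≤ f n p := by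
    intro n
    induction n with
    | zero => intro _ p; exact hx p
    | succ k ih =>
      intro hk p
      have hkN : k < N := hk
      obtain ⟨hδ, q, hq, hdq, hle, heq⟩ := hstep k hkN
      rw [heq]
      by_cases hpq : p = q
      · subst hpq; rw [Function.update_self]; linarith
      · rw [Function.update_of_ne hpq]; exact ih hkN.le p
  -- one-step monotonicity of maxDelay
  have hmono : ∀ n, n < N → maxDelay (f (n + 1)) d ≤ maxDelay (f n) d := by
    intro n hn
    obtain ⟨hδ, q, hq, hdq, hle, heq⟩ := hstep n hn
    by_cases hne : (d '' {p | 0 < f (n + 1) p}).Nonempty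
    · apply csSup_le hne
      rintro r ⟨s, hs, rfl⟩
      have hs' : 0 < f n s := by
        have h := hs
        simp only [Set.mem_setOf_eq] at h
        rw [heq] at h
        rcases eq_or_ne s q with rfl | hsq
        · rw [Function.update_self] at h; linarith
        · rwa [Function.update_of_ne hsq] at h
      exact le_csSup (hbdd _) ⟨s, hs', rfl⟩
    · rw [Set.not_nonempty_iff_eq_empty] at hne
      unfold maxDelay
      rw [hne, Real.sSup_empty]
      calc (0:ℝ) ≤ d q := hd q
        _ ≤ _ := le_csSup (hbdd _) ⟨q, hq, rfl⟩
  -- maxDelay (f N) ≤ maxDelay (f n) for n ≤ N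
  have hchain : ∀ j n, n + j ≤ N → maxDelay (f (n + j)) d ≤ maxDelay (f n) d := by
    intro j
    induction j with
    | zero => intro n _; simp
    | succ k ih =>
      intro n hnk
      have h1 : n + 1 + k ≤ N := by omega
      have := ih (n + 1) h1
      have h2 := hmono n (by omega)
      calc maxDelay (f (n + (k + 1))) d = maxDelay (f (n + 1 + k)) d := by
            rw [show n + (k + 1) = n + 1 + k from by omega]
        _ ≤ maxDelay (f (n + 1)) d := this
        _ ≤ maxDelay (f n) d := h2
  have hMle : ∀ n, n ≤ N → maxDelay (f N) d ≤ maxDelay (f n) d := by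
    intro n hn
    have := hchain (N - n) n (by omega)
    rwa [show n + (N - n) = N by omega] at this
  -- tot evolution
  have htot : ∀ m, m ≤ N →
      tot (f m) d = tot (f 0) d - ∑ n ∈ Finset.range m, δ n * maxDelay (f n) d := by
    intro m
    induction m with
    | zero => intro _; simp
    | succ k ih =>
      intro hk
      have hkN : k < N := hk
      obtain ⟨hδ, q, hq, hdq, hle, heq⟩ := hstep k hkN
      have hstepval : tot (f (k + 1)) d = tot (f k) d - δ k * d q := by
        rw [heq]
        unfold tot
        rw [← Finset.add_sum_erase _ (fun p => Function.update (f k) q (f k q - δ k) p * d p)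
            (Finset.mem_univ q),
          ← Finset.add_sum_erase _ (fun p => f k p * d p) (Finset.mem_univ q),
          Function.update_self,
          Finset.sum_congr rfl
            (fun p hp => by rw [Function.update_of_ne (Finset.ne_of_mem_erase hp)])]
        ring
      rw [Finset.sum_range_succ, hstepval, ih hkN.le, hdq]
      ring
  -- total at N is nonnegative
  have htotN : 0 ≤ tot (f N) d := by
    apply Finset.sum_nonneg
    intro p _
    exact mul_nonneg (hnn N le_rfl p) (hd p)
  have hfinal := htot N le_rfl
  -- lower bound the sum
  set M := maxDelay (f N) d with hM
  have hsum_ge : (∑ n ∈ Finset.range N, δ n) * M ≤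
      ∑ n ∈ Finset.range N, δ n * maxDelay (f n) d := by
    rw [Finset.sum_mul]
    apply Finset.sum_le_sum
    intro n hn
    have hn' : n < N := Finset.mem_range.mp hn
    exact mul_le_mul_of_nonneg_left (hMle n hn'.le) (hstep n hn').1.le
  have hkey : ε * thr (f 0) * M ≤ tot (f 0) d := by
    rw [← htotal]
    nlinarith [hfinal, htotN, hsum_ge]
  have htotle : tot (f 0) d ≤ D * thr (f 0) := by
    rw [div_le_iff₀ hthr] at havg; exact havg
  rw [le_div_iff₀ hε]
  nlinarith [hkey, htotle, hthr]
end

section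
/- (PASS-M refinement) Under the setting of Lemma 3.1, suppose f̄ is obtained from f̂ by deleting rate from slowest flow-carrying paths until M(f̄) ≤ D, and let ε' = (|f̂| - |f̄|)/|f̂| (assume |f̂| > 0 and ε' > 0). Then ε'·M(f̄) ≤ A(f̂); moreover if additionally the deletion had stopped after removing any total rate δ·|f̂| with 0 < δ ≤ ε', the maximum delay of the resulting intermediate flow is at least M(f̄). -/
lemma sum_update_mul_aux {P : Type*} [Fintype P] [DecidableEq P]
    (x d : P → ℝ) (p : P) (v : ℝ) :
    ∑ q, Function.update x p v q * d q = (∑ q, x q * d q) - x p * d p + v * d p := by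
  have h : (fun q => Function.update x p v q * d q)
      = Function.update (fun q => x q * d q) p (v * d p) := by
    funext q
    rcases eq_or_ne q p with rfl | hne
    · simp
    · simp [Function.update_of_ne hne]
  rw [h, Finset.sum_update_of_mem (Finset.mem_univ p),
    Finset.sum_eq_sum_sdiff_singleton_add (Finset.mem_univ p) (fun q => x q * d q)]
  ring

lemma sum_update_aux {P : Type*} [Fintype P] [DecidableEq P]
    (x : P → ℝ) (p : P) (v : ℝ) :
    ∑ q, Function.update x p v q = (∑ q, x q) - x p + v := by
  rw [Finset.sum_update_of_mem (Finset.mem_univ p),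
    Finset.sum_eq_sum_sdiff_singleton_add (Finset.mem_univ p) x]
  ring

theorem stmt_14 {P : Type*} [Fintype P] [DecidableEq P]
    (d : P → ℝ) (hd : ∀ p, 0 ≤ d p)
    (N : ℕ) (f : ℕ → P → ℝ) (δ : ℕ → ℝ)
    (hx : ∀ p, 0 ≤ f 0 p)
    (hstep : ∀ n < N, 0 < δ n ∧ ∃ p : P, 0 < f n p ∧ d p = maxDelay (f n) d ∧
      δ n ≤ f n p ∧ f (n + 1) = Function.update (f n) p (f n p - δ n))
    (D : ℝ) (hD : 0 ≤ D) (hstop : maxDelay (f N) d ≤ D)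
    (hthr : 0 < thr (f 0))
    (ε' : ℝ) (hε' : ε' = (thr (f 0) - thr (f N)) / thr (f 0)) (hε'pos : 0 < ε') :
    ε' * maxDelay (f N) d ≤ tot (f 0) d / thr (f 0) ∧
    ∀ n ≤ N, maxDelay (f N) d ≤ maxDelay (f n) d := by
  -- nonnegativity of all intermediate flows
  have hnn : ∀ n, n ≤ N → ∀ p, 0 ≤ f n p := by
    intro n
    induction n with
    | zero => intro _; exact hx
    | succ n ih =>
      intro hn q
      have hnN : n < N := Nat.lt_of_lt_of_le (Nat.lt_succ_self n) hn
      obtain ⟨hδ, p, hp, hdp, hle, hupd⟩ := hstep n hnN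
      rw [hupd]
      rcases eq_or_ne q p with rfl | hne
      · simp [sub_nonneg.mpr hle]
      · rw [Function.update_of_ne hne]
        exact ih (le_of_lt hnN) q
  -- monotone step of maxDelay
  have hmono : ∀ n < N, maxDelay (f (n + 1)) d ≤ maxDelay (f n) d := by
    intro n hn
    obtain ⟨hδ, p, hp, hdp, hle, hupd⟩ := hstep n hn
    have hMn : 0 ≤ maxDelay (f n) d := hdp ▸ hd p
    rcases Set.eq_empty_or_nonempty {q | 0 < f (n + 1) q} with hemp | hne
    · show sSup _ ≤ _
      rw [hemp, Set.image_empty, Real.sSup_empty]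
      exact hMn
    · apply csSup_le_csSup ((Set.toFinite _).bddAbove)
      · exact hne.image d
      · apply Set.image_mono
        intro q hq
        simp only [Set.mem_setOf_eq] at hq ⊢
        rw [hupd] at hq
        rcases eq_or_ne q p with rfl | hne'
        · exact hp
        · rwa [Function.update_of_ne hne'] at hq
  -- second conclusion
  have part2 : ∀ n ≤ N, maxDelay (f N) d ≤ maxDelay (f n) d := by
    have key : ∀ k n, n + k ≤ N → maxDelay (f (n + k)) d ≤ maxDelay (f n) d := by
      intro k
      induction k with
      | zero => intro n _; exact le_rfl
      | succ k ih =>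
        intro n h
        have h1 : maxDelay (f (n + 1 + k)) d ≤ maxDelay (f (n + 1)) d :=
          ih (n + 1) (by omega)
        have h2 := hmono n (by omega)
        have : n + (k + 1) = n + 1 + k := by omega
        rw [this]
        exact h1.trans h2
    intro n hn
    have := key (N - n) n (by omega)
    rwa [show n + (N - n) = N by omega] at this
  -- key telescoping inequality
  have hkey : ∀ n ≤ N,
      (thr (f 0) - thr (f n)) * maxDelay (f N) d ≤ tot (f 0) d - tot (f n) d := by
    intro n
    induction n with
    | zero => intro _; simp
    | succ n ih =>
      intro hn
      have hnN : n < N := Nat.lt_of_lt_of_le (Nat.lt_succ_self n) hn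
      obtain ⟨hδ, p, hp, hdp, hle, hupd⟩ := hstep n hnN
      have hthrstep : thr (f (n + 1)) = thr (f n) - δ n := by
        rw [hupd]; unfold thr; rw [sum_update_aux]; ring
      have htotstep : tot (f (n + 1)) d = tot (f n) d - δ n * maxDelay (f n) d := by
        rw [hupd]; unfold tot; rw [sum_update_mul_aux, hdp]; ring
      have hih := ih (le_of_lt hnN)
      have hM := part2 n (le_of_lt hnN)
      have : δ n * maxDelay (f N) d ≤ δ n * maxDelay (f n) d :=
        mul_le_mul_of_nonneg_left hM (le_of_lt hδ)
      rw [hthrstep, htotstep]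
      nlinarith [hih, this]
  have hN := hkey N le_rfl
  have htotN : 0 ≤ tot (f N) d :=
    Finset.sum_nonneg fun q _ => mul_nonneg (hnn N le_rfl q) (hd q)
  refine ⟨?_, part2⟩
  rw [hε', div_mul_eq_mul_div]
  have h1 : (thr (f 0) - thr (f N)) * maxDelay (f N) d ≤ tot (f 0) d := by linarith
  gcongr
end
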